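/- arXiv:math/9611219 — 3 statements merged into one kernel-verified Lean document; each statement's English description precedes it below -/
import Mathlib

section
/- Every compact subgroup of the nilradical of a connected Lie group G is central in G. -/
/-!
A Lie group has no small subgroups: in a chart at `1` the squaring map has derivative `2`, so
near `1` it moves points away from `1` by a factor at least `3/2`; a subgroup contained in a small
neighbourhood of `1` is closed under squaring, hence trivial.

Let `K` be a compact subgroup of a normal nilpotent subgroup `N`, and let `L` be a set whose
elements near `1` centralize `K`. If `w` is near `1` and `⁅w, z⁆ ∈ L` for all `z ∈ K`, then by
compactness of `K` all these commutators are near `1`, so they centralize `K`; hence `z ↦ ⁅w, z⁆`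
is a homomorphism on `K` whose image lies in a small neighbourhood of `1`, so it is trivial and
`w` centralizes `K`. Climbing the upper central series of `N`, and finally using `⁅G, N⁆ ≤ N`,
shows that the centralizer of `K` is a neighbourhood of `1`: an open subgroup, which in a
connected group is everything.
-/

open Set Topology Filter
open scoped Manifold commutatorElement

theorem Subgroup.eq_bot_of_coe_subset_of_mul_self_expanding {G : Type*} [Group G] {U : Set G}
    {ρ : G → ℝ} {r C : ℝ} (hr : 1 < r) (hexp : ∀ g ∈ U, r * ρ g ≤ ρ (g * g))
    (hbdd : ∀ g ∈ U, ρ g ≤ C) (hzero : ∀ g ∈ U, ρ g ≤ 0 → g = 1) {H : Subgroup G}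
    (hH : (H : Set G) ⊆ U) : H = ⊥ := by
  rw [Subgroup.eq_bot_iff_forall]
  intro s hs
  have hpow : ∀ k : ℕ, r ^ k * ρ s ≤ ρ (s ^ 2 ^ k) := by
    intro k
    induction k with
    | zero => simp
    | succ k ih =>
      have hsq : s ^ 2 ^ (k + 1) = s ^ 2 ^ k * s ^ 2 ^ k := by rw [pow_succ, pow_mul, sq]
      calc r ^ (k + 1) * ρ s = r * (r ^ k * ρ s) := by ring
        _ ≤ r * ρ (s ^ 2 ^ k) := mul_le_mul_of_nonneg_left ih (by linarith)
        _ ≤ ρ (s ^ 2 ^ (k + 1)) := hsq ▸ hexp _ (hH (H.pow_mem hs _))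
  refine hzero s (hH hs) (not_lt.1 fun hpos ↦ ?_)
  obtain ⟨k, hk⟩ := pow_unbounded_of_one_lt (C / ρ s) hr
  rw [div_lt_iff₀ hpos] at hk
  linarith [hpow k, hbdd _ (hH (H.pow_mem hs (2 ^ k)))]

section Calculus

variable {𝕜 : Type*} [NontriviallyNormedField 𝕜] {E : Type*} [NormedAddCommGroup E]
  [NormedSpace 𝕜 E]

theorem HasFDerivAt.eventually_mul_norm_sub_le_norm_sub {f : E → E} {a : 𝕜} {c : E}
    (hf : HasFDerivAt f (a • ContinuousLinearMap.id 𝕜 E) c) {r : ℝ} (hr : r < ‖a‖) :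
    ∀ᶠ x in 𝓝 c, r * ‖x - c‖ ≤ ‖f x - f c‖ := by
  filter_upwards [hf.isLittleO.def (sub_pos.2 hr)] with x hx
  simp only [smul_apply, ContinuousLinearMap.id_apply] at hx
  have hlin : ‖a • (x - c)‖ = ‖a‖ * ‖x - c‖ := norm_smul a (x - c)
  have htri := norm_sub_norm_le (a • (x - c)) (f x - f c)
  rw [norm_sub_rev (a • (x - c))] at htri
  linarith

theorem hasFDerivAt_diag_of_eventuallyEq_id {m : E × E → E} {c : E}
    (hm : DifferentiableAt 𝕜 m (c, c)) (hleft : (fun x ↦ m (x, c)) =ᶠ[𝓝 c] id)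
    (hright : (fun x ↦ m (c, x)) =ᶠ[𝓝 c] id) :
    HasFDerivAt (fun x ↦ m (x, x)) ((2 : 𝕜) • ContinuousLinearMap.id 𝕜 E) c := by
  obtain ⟨D, hD⟩ := hm
  have hinl : D.comp (ContinuousLinearMap.inl 𝕜 E E) = ContinuousLinearMap.id 𝕜 E :=
    ((hD.comp (f := fun x ↦ (x, c)) c (hasFDerivAt_prodMk_left c c)).congr_of_eventuallyEq
      hleft.symm).unique (hasFDerivAt_id c)
  have hinr : D.comp (ContinuousLinearMap.inr 𝕜 E E) = ContinuousLinearMap.id 𝕜 E :=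
    ((hD.comp (f := fun x ↦ (c, x)) c (hasFDerivAt_prodMk_right c c)).congr_of_eventuallyEq
      hright.symm).unique (hasFDerivAt_id c)
  refine (hD.comp (f := fun x ↦ (x, x)) c
    ((hasFDerivAt_id c).prodMk (hasFDerivAt_id c))).congr_fderiv ?_
  ext u
  have h := congr($hinl u + $hinr u)
  simp only [ContinuousLinearMap.comp_apply, ContinuousLinearMap.inl_apply,
    ContinuousLinearMap.inr_apply, ContinuousLinearMap.id_apply, ← map_add, Prod.mk_add_mk,
    add_zero, zero_add] at h
  simpa [two_smul] using h

end Calculus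

section ChartAtOne

variable {E : Type*} [NormedAddCommGroup E] [NormedSpace ℝ E] {G : Type*} [Group G]
  [TopologicalSpace G] [ChartedSpace E G] {n : WithTop ℕ∞} [ContMDiffMul 𝓘(ℝ, E) n G]

local notation "𝔢" => extChartAt 𝓘(ℝ, E) (1 : G)

theorem differentiableAt_extChartAt_mul (hn : n ≠ 0) :
    DifferentiableAt ℝ (fun p : E × E ↦ 𝔢 ((𝔢).symm p.1 * (𝔢).symm p.2)) (𝔢 1, 𝔢 1) := by
  have h := ((contMDiff_mul 𝓘(ℝ, E) n).contMDiffAt (x := ((1 : G), (1 : G)))).mdifferentiableAt hn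
  rw [mdifferentiableAt_iff] at h
  exact differentiableWithinAt_univ.1 (by simpa using! h.2)

theorem eventually_mul_norm_extChartAt_sub_le_mul_self (hn : n ≠ 0) :
    ∀ᶠ g in 𝓝 (1 : G), (3 / 2 : ℝ) * ‖𝔢 g - 𝔢 1‖ ≤ ‖𝔢 (g * g) - 𝔢 1‖ := by
  have hsq : HasFDerivAt (fun x ↦ 𝔢 ((𝔢).symm x * (𝔢).symm x))
      ((2 : ℝ) • ContinuousLinearMap.id ℝ E) (𝔢 1) := by
    refine hasFDerivAt_diag_of_eventuallyEq_id (differentiableAt_extChartAt_mul hn) ?_ ?_ <;>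
    filter_upwards [extChartAt_target_mem_nhds (I := 𝓘(ℝ, E)) (1 : G)] with x hx <;>
    simp only [extChartAt_to_inv, mul_one, one_mul, id, (𝔢).right_inv hx]
  have hgrow := hsq.eventually_mul_norm_sub_le_norm_sub (r := 3 / 2) (by norm_num)
  filter_upwards [continuousAt_extChartAt (I := 𝓘(ℝ, E)) (1 : G) hgrow,
    extChartAt_source_mem_nhds (I := 𝓘(ℝ, E)) (1 : G)] with g hg hsrc
  simpa only [mem_preimage, mem_ofPred_eq, (𝔢).left_inv hsrc, extChartAt_to_inv, mul_one]
    using hg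

end ChartAtOne

def NoSmallSubgroups (G : Type*) [Group G] [TopologicalSpace G] : Prop :=
  ∃ U ∈ 𝓝 (1 : G), ∀ H : Subgroup G, (H : Set G) ⊆ U → H = ⊥

theorem ContMDiffMul.noSmallSubgroups {E : Type*} [NormedAddCommGroup E] [NormedSpace ℝ E]
    {G : Type*} [Group G] [TopologicalSpace G] [ChartedSpace E G] {n : WithTop ℕ∞}
    [ContMDiffMul 𝓘(ℝ, E) n G] (hn : n ≠ 0) : NoSmallSubgroups G := by
  set e := extChartAt 𝓘(ℝ, E) (1 : G)
  have hball : ∀ᶠ g in 𝓝 (1 : G), ‖e g - e 1‖ ≤ 1 :=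
    ((continuousAt_extChartAt 1).sub_const (e 1)).norm.eventually_le_const
      (by rw [sub_self, norm_zero]; exact one_pos)
  refine ⟨{g | (3 / 2 : ℝ) * ‖e g - e 1‖ ≤ ‖e (g * g) - e 1‖ ∧ g ∈ e.source ∧
    ‖e g - e 1‖ ≤ 1}, (eventually_mul_norm_extChartAt_sub_le_mul_self hn).and
      (Filter.Eventually.and (extChartAt_source_mem_nhds 1) hball), fun H hH ↦ ?_⟩
  refine Subgroup.eq_bot_of_coe_subset_of_mul_self_expanding (by norm_num : (1 : ℝ) < 3 / 2)
    (fun g hg ↦ hg.1) (fun g hg ↦ hg.2.2) (fun g hg hg0 ↦ ?_) hH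
  exact e.injOn hg.2.1 (mem_extChartAt_source 1) (sub_eq_zero.1 (norm_le_zero_iff.1 hg0))

section Centralizer

variable {G : Type*} [Group G]

theorem commutatorElement_mul_right_of_commute {v z z' : G} (h : Commute ⁅v, z'⁆ z) :
    ⁅v, z * z'⁆ = ⁅v, z⁆ * ⁅v, z'⁆ := by
  rw [commutatorElement_mul_right_eq_mul_conj, mul_assoc _ z, ← h.eq, ← mul_assoc,
    mul_inv_cancel_right]

theorem mem_centralizer_of_commutatorElement_mem {U : Set G}
    (hU : ∀ H : Subgroup G, (H : Set G) ⊆ U → H = ⊥) {K : Subgroup G} {v : G}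
    (hvU : ∀ z ∈ K, ⁅v, z⁆ ∈ U) (hvK : ∀ z ∈ K, ⁅v, z⁆ ∈ Subgroup.centralizer K) :
    v ∈ Subgroup.centralizer K := by
  let θ : K →* G :=
    { toFun z := ⁅v, (z : G)⁆
      map_one' := commutatorElement_one_right v
      map_mul' z z' := commutatorElement_mul_right_of_commute
        (Subgroup.mem_centralizer_iff.1 (hvK z' z'.2) z z.2).symm }
  have hθ : θ = 1 := MonoidHom.range_eq_bot_iff.1 <| hU _ <| by
    rintro _ ⟨z, rfl⟩
    exact hvU z z.2
  refine Subgroup.mem_centralizer_iff.2 fun z hz ↦ ?_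
  exact (commutatorElement_eq_one_iff_mul_comm.1 (DFunLike.congr_fun hθ ⟨z, hz⟩)).symm

variable [TopologicalSpace G] [IsTopologicalGroup G]

theorem IsCompact.eventually_forall_commutatorElement_mem {K : Set G} (hK : IsCompact K)
    {U : Set G} (hU : U ∈ 𝓝 (1 : G)) : ∀ᶠ v in 𝓝 (1 : G), ∀ z ∈ K, ⁅v, z⁆ ∈ U := by
  refine hK.eventually_forall_of_forall_eventually fun z _ ↦ ?_
  have hcont : Continuous fun p : G × G ↦ ⁅p.1, p.2⁆ := by
    simp only [commutatorElement_def]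
    fun_prop
  exact hcont.continuousAt.preimage_mem_nhds (by rwa [commutatorElement_one_left])

theorem NoSmallSubgroups.eventually_mem_centralizer_of_commutatorElement_mem
    (hG : NoSmallSubgroups G) {K : Subgroup G} (hK : IsCompact (K : Set G)) {L L' : Set G}
    (hL : ∀ᶠ w in 𝓝 1, w ∈ L → w ∈ Subgroup.centralizer K)
    (hLL' : ∀ w ∈ L', ∀ z ∈ K, ⁅w, z⁆ ∈ L) :
    ∀ᶠ w in 𝓝 (1 : G), w ∈ L' → w ∈ Subgroup.centralizer K := by
  obtain ⟨U, hU, hUG⟩ := hG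
  filter_upwards [hK.eventually_forall_commutatorElement_mem (inter_mem hL hU)] with w hw hwL'
  exact mem_centralizer_of_commutatorElement_mem hUG (fun z hz ↦ (hw z hz).2)
    fun z hz ↦ (hw z hz).1 (hLL' w hwL' z hz)

theorem NoSmallSubgroups.eventually_mem_centralizer_of_mem_upperCentralSeries
    (hG : NoSmallSubgroups G) {N K : Subgroup G} (hKN : K ≤ N) (hK : IsCompact (K : Set G))
    (j : ℕ) : ∀ᶠ w in 𝓝 (1 : G),
      w ∈ (Subgroup.upperCentralSeries N j).map N.subtype → w ∈ Subgroup.centralizer K := by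
  induction j with
  | zero =>
    refine Eventually.of_forall fun w hw ↦ ?_
    rw [Subgroup.upperCentralSeries_zero, Subgroup.map_bot, Subgroup.mem_bot] at hw
    exact hw ▸ Subgroup.one_mem _
  | succ j ih =>
    refine hG.eventually_mem_centralizer_of_commutatorElement_mem hK ih ?_
    rintro _ ⟨w, hw, rfl⟩ z hz
    exact ⟨_, Subgroup.mem_upperCentralSeries_succ_iff.1 hw ⟨z, hKN hz⟩,
      map_commutatorElement N.subtype _ _⟩

theorem NoSmallSubgroups.centralizer_mem_nhds_one (hG : NoSmallSubgroups G) {N K : Subgroup G}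
    (hN : N.Normal) (hNnil : Group.IsNilpotent N) (hKN : K ≤ N) (hK : IsCompact (K : Set G)) :
    (Subgroup.centralizer (K : Set G) : Set G) ∈ 𝓝 1 := by
  have hcentral := hG.eventually_mem_centralizer_of_mem_upperCentralSeries hKN hK
    (Group.nilpotencyClass N)
  rw [Subgroup.upperCentralSeries_nilpotencyClass, ← MonoidHom.range_eq_map,
    Subgroup.range_subtype] at hcentral
  refine (hG.eventually_mem_centralizer_of_commutatorElement_mem hK hcentral (L' := univ)
    fun w _ z hz ↦ ?_).mono fun w hw ↦ hw trivial
  exact Subgroup.commutator_le_right ⊤ N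
    (Subgroup.commutator_mem_commutator (Subgroup.mem_top w) (hKN hz))

theorem Subgroup.eq_top_of_mem_nhds_one [ConnectedSpace G] {H : Subgroup G}
    (hH : (H : Set G) ∈ 𝓝 1) : H = ⊤ := by
  have hopen := H.isOpen_of_mem_nhds hH
  exact Subgroup.coe_eq_univ.1
    (IsClopen.eq_univ ⟨H.isClosed_of_isOpen hopen, hopen⟩ ⟨1, H.one_mem⟩)

end Centralizer

theorem compact_subgroup_of_nilradical_is_central_general
    {E : Type*} [NormedAddCommGroup E] [NormedSpace ℝ E]
    {G : Type*} [Group G] [TopologicalSpace G] [IsTopologicalGroup G] [ChartedSpace E G]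
    [LieGroup 𝓘(ℝ, E) (⊤ : ℕ∞) G] [ConnectedSpace G]
    (N : Subgroup G) (hNnormal : N.Normal)
    (hNnil : Group.IsNilpotent N)
    (K : Subgroup G) (hKN : K ≤ N) (hK : IsCompact (K : Set G)) :
    K ≤ Subgroup.center G := by
  have hG : NoSmallSubgroups G := ContMDiffMul.noSmallSubgroups (E := E) (n := (⊤ : ℕ∞)) (by simp)
  exact Subgroup.centralizer_eq_top_iff_subset.1
    (Subgroup.eq_top_of_mem_nhds_one (hG.centralizer_mem_nhds_one hNnormal hNnil hKN hK))

/-- Every compact subgroup of the nilradical (the largest connected nilpotent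
normal subgroup) of a connected Lie group `G` is central in `G`. -/
theorem compact_subgroup_of_nilradical_is_central
    {E : Type*} [NormedAddCommGroup E] [NormedSpace ℝ E] [FiniteDimensional ℝ E]
    {G : Type*} [Group G] [TopologicalSpace G] [IsTopologicalGroup G] [ChartedSpace E G]
    [LieGroup 𝓘(ℝ, E) (⊤ : ℕ∞) G] [ConnectedSpace G]
    (N : Subgroup G) (hNnormal : N.Normal) (hNconn : IsConnected (N : Set G))
    (hNnil : Group.IsNilpotent N)
    (hNmax : ∀ M : Subgroup G, M.Normal → IsConnected (M : Set G) → Group.IsNilpotent M → M ≤ N)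
    (K : Subgroup G) (hKN : K ≤ N) (hK : IsCompact (K : Set G)) :
    K ≤ Subgroup.center G :=
  compact_subgroup_of_nilradical_is_central_general (E := E) N hNnormal hNnil K hKN hK
end

section
/- Every Zariski closed unipotent subgroup of GL_n(ℝ) is connected and simply connected (in the manifold topology). -/
/-!
For a unipotent `u`, the binomial series `u ^ t = ∑ₖ (t choose k) (u - 1) ^ k` is a finite sum
whose entries are polynomials in `t`, and it agrees with the ordinary power at `t ∈ ℕ`. A polynomial
vanishing on `ℕ` vanishes identically, so every polynomial identity satisfied by all the powers
`u ^ m` — the equations cutting out `U`, and `u ^ m * (u⁻¹) ^ m = 1` — holds for every real `t`.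
Hence `(s, u) ↦ u ^ s` is a contraction of `U` onto `1`, and a contractible space is connected and
simply connected.
-/

open Matrix

/-- A subset of `GL n ℝ` is Zariski closed if it is the common zero set, within `GL n ℝ`,
of a family of polynomials in the matrix entries. -/
def IsZariskiClosed {n : ℕ} (Z : Set (GL (Fin n) ℝ)) : Prop :=
  ∃ T : Set (MvPolynomial (Fin n × Fin n) ℝ),
    Z = {g : GL (Fin n) ℝ | ∀ p ∈ T,
      MvPolynomial.eval (fun ij => (g : Matrix (Fin n) (Fin n) ℝ) ij.1 ij.2) p = 0}

/-- A subgroup of `GL n ℝ` is unipotent if all its elements `u` satisfy `(u - 1)^n = 0`. -/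
def IsUnipotentSubgroup {n : ℕ} (U : Subgroup (GL (Fin n) ℝ)) : Prop :=
  ∀ u ∈ U, ((u : Matrix (Fin n) (Fin n) ℝ) - 1) ^ n = 0

open Polynomial Finset

namespace Polynomial

theorem eq_zero_of_forall_eval_natCast_eq_zero {R : Type*} [CommRing R] [IsDomain R] [CharZero R]
    {p : R[X]} (h : ∀ m : ℕ, p.eval (m : R) = 0) : p = 0 :=
  p.eq_zero_of_infinite_isRoot <| Set.infinite_of_injective_forall_mem Nat.cast_injective h

variable {K : Type*} [Field K]

noncomputable def binomialPoly (k : ℕ) : K[X] :=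
  (k.factorial : K)⁻¹ • descPochhammer K k

theorem binomialPoly_eval_natCast [CharZero K] (k m : ℕ) :
    (binomialPoly k : K[X]).eval (m : K) = m.choose k := by
  rw [binomialPoly, eval_smul, descPochhammer_eval_eq_descFactorial,
    Nat.descFactorial_eq_factorial_mul_choose, Nat.cast_mul, smul_eq_mul,
    inv_mul_cancel_left₀ (Nat.cast_ne_zero.2 k.factorial_ne_zero)]

end Polynomial

theorem MvPolynomial.eval_eq_zero_of_forall_natCast {R σ : Type*} [CommRing R] [IsDomain R]
    [CharZero R] (p : MvPolynomial σ R) (f : σ → R[X])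
    (h : ∀ m : ℕ, eval (fun i => (f i).eval (m : R)) p = 0) (t : R) :
    eval (fun i => (f i).eval t) p = 0 := by
  have eval_aeval (s : R) : eval (fun i => (f i).eval s) p = (aeval f p).eval s := by
    rw [← coe_aeval_eq_eval, ← Polynomial.coe_aeval_eq_eval, comp_aeval_apply]
    rfl
  have : aeval f p = 0 := Polynomial.eq_zero_of_forall_eval_natCast_eq_zero fun m => by
    rw [← eval_aeval, h]
  rw [eval_aeval, this, Polynomial.eval_zero]

theorem Matrix.eq_of_forall_map_eval_natCast_eq {ι κ R : Type*} [CommRing R] [IsDomain R]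
    [CharZero R] {P Q : Matrix ι κ R[X]}
    (h : ∀ m : ℕ, P.map (eval (m : R)) = Q.map (eval (m : R))) :
    P = Q := by
  refine Matrix.ext fun i j => ?_
  rw [← sub_eq_zero]
  refine Polynomial.eq_zero_of_forall_eval_natCast_eq_zero (R := R) fun m => ?_
  rw [eval_sub, sub_eq_zero]
  exact congrFun₂ (h m) i j

theorem Units.pow_inv_sub_one_eq_zero {R : Type*} [Ring R] {u : Rˣ} {d : ℕ}
    (hu : ((u : R) - 1) ^ d = 0) : ((↑u⁻¹ : R) - 1) ^ d = 0 := by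
  have : (↑u⁻¹ : R) - 1 = -↑u⁻¹ * (↑u - 1) := by
    rw [neg_mul, mul_sub, Units.inv_mul, mul_one, neg_sub]
  have hcomm : Commute (-↑u⁻¹ : R) (↑u - 1) :=
    ((Commute.units_inv_left (Commute.refl (u : R))).sub_right (Commute.one_right _)).neg_left
  rw [this, hcomm.mul_pow, hu, mul_zero]

namespace Matrix

variable {ι K : Type*} [Fintype ι] [DecidableEq ι] [Field K]

/-- The binomial series `A ^ t = ∑ₖ (t choose k) (A - 1) ^ k` truncated at `k = d`, which is
exact when `(A - 1) ^ d = 0`. -/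
noncomputable def unipotentPowPoly (A : Matrix ι ι K) (d : ℕ) : Matrix ι ι K[X] :=
  ∑ k ∈ range d, (binomialPoly k : K[X]) • ((A - 1) ^ k).map C

noncomputable def unipotentPow (A : Matrix ι ι K) (d : ℕ) (t : K) : Matrix ι ι K :=
  (evalRingHom t).mapMatrix (A.unipotentPowPoly d)

theorem unipotentPow_eq_sum (A : Matrix ι ι K) (d : ℕ) (t : K) :
    A.unipotentPow d t = ∑ k ∈ range d, (binomialPoly k).eval t • (A - 1) ^ k := by
  ext i j
  simp [unipotentPow, unipotentPowPoly, Matrix.sum_apply]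

theorem unipotentPow_natCast [CharZero K] {A : Matrix ι ι K} {d : ℕ} (hA : (A - 1) ^ d = 0)
    (m : ℕ) : A.unipotentPow d m = A ^ m := by
  calc A.unipotentPow d m = ∑ k ∈ range d, (m.choose k : K) • (A - 1) ^ k := by
        simp only [unipotentPow_eq_sum, binomialPoly_eval_natCast]
    _ = ∑ k ∈ range (m + 1 + d), (m.choose k : K) • (A - 1) ^ k :=
        sum_subset (range_subset_range.2 (by omega)) fun k _ hk => by
          rw [pow_eq_zero_of_le (by simpa using hk) hA, smul_zero]
    _ = ∑ k ∈ range (m + 1), (m.choose k : K) • (A - 1) ^ k :=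
        (sum_subset (range_subset_range.2 (by omega)) fun k _ hk => by
          rw [Nat.choose_eq_zero_of_lt (by simpa using hk), Nat.cast_zero, zero_smul]).symm
    _ = (A - 1 + 1) ^ m := by
        simp only [(Commute.one_right (A - 1)).add_pow, one_pow, mul_one, Nat.cast_smul_eq_nsmul,
          nsmul_eq_mul']
    _ = A ^ m := by rw [sub_add_cancel]

theorem _root_.Continuous.matrix_unipotentPow [TopologicalSpace K] [IsTopologicalRing K]
    {X : Type*} [TopologicalSpace X] {A : X → Matrix ι ι K} {τ : X → K} (hA : Continuous A)
    (hτ : Continuous τ) (d : ℕ) : Continuous fun x => (A x).unipotentPow d (τ x) := by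
  simp only [unipotentPow_eq_sum]
  fun_prop

theorem unipotentPow_mul_eq_one [CharZero K] {A B : Matrix ι ι K} {d : ℕ}
    (hA : (A - 1) ^ d = 0) (hB : (B - 1) ^ d = 0) (hAB : A * B = 1) (t : K) :
    A.unipotentPow d t * B.unipotentPow d t = 1 := by
  have hpoly : A.unipotentPowPoly d * B.unipotentPowPoly d = 1 := by
    refine Matrix.eq_of_forall_map_eval_natCast_eq fun m => ?_
    change (evalRingHom (m : K)).mapMatrix (_ * _) = (evalRingHom (m : K)).mapMatrix 1
    rw [map_mul, map_one]
    change A.unipotentPow d m * B.unipotentPow d m = 1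
    rw [unipotentPow_natCast hA, unipotentPow_natCast hB,
      ← Commute.mul_pow (hAB.trans (mul_eq_one_comm.1 hAB).symm), hAB, one_pow]
  have := congrArg (evalRingHom t).mapMatrix hpoly
  rwa [map_mul, map_one] at this

end Matrix

namespace Matrix.GeneralLinearGroup

variable {ι K : Type*} [Fintype ι] [DecidableEq ι] [Field K] [CharZero K] {d : ℕ}

noncomputable def unipotentPow (g : GL ι K) (hg : ((g : Matrix ι ι K) - 1) ^ d = 0) (t : K) :
    GL ι K where
  val := (g : Matrix ι ι K).unipotentPow d t
  inv := (↑g⁻¹ : Matrix ι ι K).unipotentPow d t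
  val_inv := unipotentPow_mul_eq_one hg (Units.pow_inv_sub_one_eq_zero hg) g.mul_inv t
  inv_val := unipotentPow_mul_eq_one (Units.pow_inv_sub_one_eq_zero hg) hg g.inv_mul t

theorem unipotentPow_natCast {g : GL ι K} (hg : ((g : Matrix ι ι K) - 1) ^ d = 0) (m : ℕ) :
    g.unipotentPow hg m = g ^ m :=
  Units.ext <| (Matrix.unipotentPow_natCast hg m).trans (Units.val_pow_eq_pow_val g m).symm

theorem unipotentPow_zero {g : GL ι K} (hg : ((g : Matrix ι ι K) - 1) ^ d = 0) :
    g.unipotentPow hg 0 = 1 := by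
  simpa using unipotentPow_natCast hg 0

theorem unipotentPow_one {g : GL ι K} (hg : ((g : Matrix ι ι K) - 1) ^ d = 0) :
    g.unipotentPow hg 1 = g := by
  simpa using unipotentPow_natCast hg 1

theorem continuous_unipotentPow [TopologicalSpace K] [IsTopologicalRing K] {X : Type*}
    [TopologicalSpace X] {f : X → GL ι K} {τ : X → K} (hf : Continuous f) (hτ : Continuous τ)
    (hd : ∀ x, ((f x : Matrix ι ι K) - 1) ^ d = 0) :
    Continuous fun x => (f x).unipotentPow (hd x) (τ x) := by
  refine Units.continuous_iff.2 ⟨?_, ?_⟩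
  · exact (Units.continuous_val.comp hf).matrix_unipotentPow hτ d
  · exact (Units.continuous_coe_inv.comp hf).matrix_unipotentPow hτ d

end Matrix.GeneralLinearGroup

open Matrix.GeneralLinearGroup

theorem IsZariskiClosed.unipotentPow_mem {n d : ℕ} {Z : Set (GL (Fin n) ℝ)}
    (hZ : IsZariskiClosed Z) {g : GL (Fin n) ℝ}
    (hg : ((g : Matrix (Fin n) (Fin n) ℝ) - 1) ^ d = 0) (hpow : ∀ m : ℕ, g ^ m ∈ Z) (t : ℝ) : g.unipotentPow hg t ∈ Z := by
  obtain ⟨T, rfl⟩ := hZ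
  intro p hp
  refine MvPolynomial.eval_eq_zero_of_forall_natCast p
    (fun ij => (g : Matrix (Fin n) (Fin n) ℝ).unipotentPowPoly d ij.1 ij.2) (fun m => ?_) t
  have := hpow m p hp
  rwa [← GeneralLinearGroup.unipotentPow_natCast hg m] at this

/-- Every Zariski closed unipotent subgroup of `GL n ℝ` is connected and
simply connected in the manifold topology. -/
theorem zariskiClosed_unipotent_subgroup_connected_simplyConnected
    {n : ℕ} (U : Subgroup (GL (Fin n) ℝ))
    (hZ : IsZariskiClosed (U : Set (GL (Fin n) ℝ))) (hU : IsUnipotentSubgroup U) :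
    IsConnected (U : Set (GL (Fin n) ℝ)) ∧ SimplyConnectedSpace U := by
  have unipotent (u : U) := hU u u.2
  let contraction : ContinuousMap.Homotopy (ContinuousMap.const U 1) (ContinuousMap.id U) :=
    { toFun := fun p => ⟨(p.2 : GL (Fin n) ℝ).unipotentPow (unipotent p.2) p.1,
        hZ.unipotentPow_mem _ (fun m => pow_mem p.2.2 m) _⟩
      continuous_toFun := (continuous_unipotentPow (continuous_subtype_val.comp continuous_snd)
        (continuous_subtype_val.comp continuous_fst) _).subtype_mk _
      map_zero_left := fun u => Subtype.ext (unipotentPow_zero (unipotent u))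
      map_one_left := fun u => Subtype.ext (unipotentPow_one (unipotent u)) }
  have : ContractibleSpace U :=
    (contractible_iff_id_nullhomotopic U).2 ⟨1, ContinuousMap.Homotopic.symm ⟨contraction⟩⟩
  exact ⟨isConnected_iff_connectedSpace.2 inferInstance, inferInstance⟩
end

section
/- Let p and q be distinct primes with q ≡ 3 (mod 4), and let K = ℚ(i, √p). Then q is not a square in K, and hence the special orthogonal group SO(x² + q y²) is an anisotropic torus over K. -/
/-!
Every element of `ℚ(i, √p)` has real and imaginary parts in `ℚ + ℚ√p`. If `x² = q`, comparing
imaginary parts shows that `x` is real or purely imaginary. The latter gives `-(im x)² = q < 0`;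
the former gives `(a + b√p)² = q` with `a, b ∈ ℚ`, so either `√p ∈ ℚ`, or `q` is a rational
square (`b = 0`), or `pq = (pb)²` is (`a = 0`), and all three fail for distinct primes.
A zero `(x, y)` of `x² + q y²` with `y ≠ 0` would give the square root `i x / y` of `q`.
-/

open Complex

theorem Squarefree.not_isSquare {M : Type*} [Monoid M] {n : M} (hn : Squarefree n)
    (hu : ¬IsUnit n) : ¬IsSquare n := by
  rintro ⟨r, rfl⟩
  exact hu ((hn r dvd_rfl).mul (hn r dvd_rfl))

theorem Nat.not_isSquare_mul_of_prime {p q : ℕ} (hp : p.Prime) (hq : q.Prime) (hpq : p ≠ q) :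
    ¬IsSquare (p * q) :=
  (Nat.squarefree_mul_iff.mpr ⟨(Nat.coprime_primes hp hq).mpr hpq, hp.prime.squarefree,
    hq.prime.squarefree⟩).not_isSquare (by simp [hp.ne_one])

theorem isAlgebraic_sqrt_ratCast (d : ℚ) : IsAlgebraic ℚ √(d : ℝ) := by
  rcases le_total 0 d with hd | hd
  · refine .of_pow two_pos ?_
    rw [Real.sq_sqrt (Rat.cast_nonneg.mpr hd)]
    exact isAlgebraic_algebraMap d
  · simp [Real.sqrt_eq_zero'.mpr (Rat.cast_nonpos.mpr hd), isAlgebraic_zero]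

/-- `ℚ + ℚ √d` as a `ℚ`-subalgebra of `ℝ` (for `d < 0` it is `ℚ`, since then `√d = 0`). -/
def quadraticSubalgebra (d : ℚ) : Subalgebra ℚ ℝ where
  carrier := {t | ∃ a b : ℚ, t = a + b * √d}
  mul_mem' := by
    rintro _ _ ⟨a, b, rfl⟩ ⟨a', b', rfl⟩
    rcases le_total 0 d with hd | hd
    · refine ⟨a * a' + d * b * b', a * b' + b * a', ?_⟩
      push_cast
      linear_combination (b * b' : ℝ) * Real.sq_sqrt (Rat.cast_nonneg.mpr hd)
    · refine ⟨a * a', a * b' + b * a', ?_⟩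
      simp [Real.sqrt_eq_zero'.mpr (Rat.cast_nonpos.mpr hd)]
  add_mem' := by
    rintro _ _ ⟨a, b, rfl⟩ ⟨a', b', rfl⟩
    exact ⟨a + a', b + b', by push_cast; ring⟩
  algebraMap_mem' r := ⟨r, 0, by simp⟩

theorem sqrt_mem_quadraticSubalgebra (d : ℚ) : √(d : ℝ) ∈ quadraticSubalgebra d :=
  ⟨0, 1, by simp⟩

theorem sq_ne_of_mem_quadraticSubalgebra {d r : ℚ} (hd : Irrational √(d : ℝ))
    (hr : ¬IsSquare r) (hdr : ¬IsSquare (d * r)) {t : ℝ} (ht : t ∈ quadraticSubalgebra d) :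
    t ^ 2 ≠ r := by
  obtain ⟨a, b, rfl⟩ := ht
  intro h
  have hsq : √(d : ℝ) ^ 2 = d :=
    Real.sq_sqrt (Rat.cast_nonneg.mpr (irrational_sqrt_ratCast_iff.mp hd).2)
  have key : (2 * a * b : ℝ) * √(d : ℝ) = r - a ^ 2 - d * b ^ 2 := by
    linear_combination h - (b : ℝ) ^ 2 * hsq
  by_cases hab : a * b = 0
  · rcases mul_eq_zero.mp hab with rfl | rfl
    · refine hdr ⟨d * b, ?_⟩
      exact_mod_cast (by linear_combination (-(d : ℝ)) * key : (d * r : ℝ) = d * b * (d * b))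
    · refine hr ⟨a, ?_⟩
      exact_mod_cast (by linear_combination -key : (r : ℝ) = a * a)
  · refine hd.ne_rat ((r - a ^ 2 - d * b ^ 2) / (2 * a * b)) ?_
    have h2ab : (2 * a * b : ℝ) ≠ 0 := by
      exact_mod_cast mul_assoc 2 a b ▸ mul_ne_zero two_ne_zero hab
    push_cast
    rw [eq_div_iff h2ab, mul_comm, key]

def Subalgebra.reIm (S : Subalgebra ℚ ℝ) : Subalgebra ℚ ℂ where
  carrier := {z | z.re ∈ S ∧ z.im ∈ S}
  mul_mem' := by
    rintro z w ⟨hz, hz'⟩ ⟨hw, hw'⟩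
    exact ⟨by simpa using sub_mem (mul_mem hz hw) (mul_mem hz' hw'),
      by simpa using add_mem (mul_mem hz hw') (mul_mem hz' hw)⟩
  add_mem' := by
    rintro z w ⟨hz, hz'⟩ ⟨hw, hw'⟩
    exact ⟨by simpa using add_mem hz hw, by simpa using add_mem hz' hw'⟩
  algebraMap_mem' r := ⟨by simpa using algebraMap_mem S r, by simp⟩

theorem adjoin_I_sqrt_le_reIm_quadraticSubalgebra (d : ℚ) :
    (IntermediateField.adjoin ℚ {I, ((√(d : ℝ) : ℝ) : ℂ)}).toSubalgebra ≤
      (quadraticSubalgebra d).reIm := by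
  rw [IntermediateField.adjoin_toSubalgebra_of_isAlgebraic]
  · refine Algebra.adjoin_le ?_
    rintro _ (rfl | rfl)
    · exact ⟨by simp, by simp⟩
    · exact ⟨by simpa using sqrt_mem_quadraticSubalgebra d, by simp⟩
  · rintro _ (rfl | rfl)
    · exact .of_pow two_pos (by simpa using isAlgebraic_one.neg)
    · exact (isAlgebraic_sqrt_ratCast d).algebraMap

theorem sq_ne_natCast_of_mem_reIm {S : Subalgebra ℚ ℝ} {n : ℕ} (hn : 0 < n)
    (hS : ∀ t ∈ S, t ^ 2 ≠ n) {z : ℂ} (hz : z ∈ S.reIm) : z ^ 2 ≠ n := by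
  intro h
  have hre : z.re * z.re - z.im * z.im = n := by simpa [sq] using congrArg re h
  have him : z.re * z.im = 0 := by
    have : z.re * z.im + z.im * z.re = 0 := by simpa [sq] using congrArg im h
    linarith
  rcases mul_eq_zero.mp him with h0 | h0
  · have : (0 : ℝ) < n := by exact_mod_cast hn
    nlinarith [mul_self_nonneg z.im]
  · exact hS _ hz.1 (by rw [← hre, h0]; ring)

theorem eq_zero_of_sq_add_mul_sq_eq_zero {E S : Type*} [Field E] [SetLike S E]
    [SubfieldClass S E] {K : S} {i c : E} (hi : i ^ 2 = -1) (hiK : i ∈ K)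
    (hc : ¬∃ x ∈ K, x ^ 2 = c) {x y : E} (hx : x ∈ K) (hy : y ∈ K)
    (h : x ^ 2 + c * y ^ 2 = 0) : x = 0 ∧ y = 0 := by
  by_cases hy0 : y = 0
  · subst hy0
    exact ⟨pow_eq_zero_iff two_ne_zero |>.mp (by simpa using h), rfl⟩
  · refine (hc ⟨i * x / y, div_mem (mul_mem hiK hx) hy, ?_⟩).elim
    field_simp
    linear_combination x ^ 2 * hi - h

theorem q_not_square_and_form_anisotropic_general
    (p q : ℕ) (hp : p.Prime) (hq : q.Prime) (hpq : p ≠ q)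
    (K : IntermediateField ℚ ℂ)
    (hK : K = IntermediateField.adjoin ℚ ({Complex.I, ((Real.sqrt p : ℝ) : ℂ)} : Set ℂ)) :
    (¬ ∃ x ∈ K, x ^ 2 = (q : ℂ)) ∧
      ∀ x y : ℂ, x ∈ K → y ∈ K → x ^ 2 + (q : ℂ) * y ^ 2 = 0 → x = 0 ∧ y = 0 := by
  have hKle : K.toSubalgebra ≤ (quadraticSubalgebra p).reIm := by
    simpa [hK] using adjoin_I_sqrt_le_reIm_quadraticSubalgebra p
  have hreal : ∀ t ∈ quadraticSubalgebra p, t ^ 2 ≠ q := fun t ht => by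
    exact_mod_cast sq_ne_of_mem_quadraticSubalgebra (r := q) (by exact_mod_cast hp.irrational_sqrt)
      (by exact_mod_cast hq.prime.not_isSquare)
      (by exact_mod_cast Nat.not_isSquare_mul_of_prime hp hq hpq) ht
  have hnsq : ¬∃ x ∈ K, x ^ 2 = (q : ℂ) := fun ⟨x, hxK, hx⟩ =>
    sq_ne_natCast_of_mem_reIm hq.pos hreal (hKle hxK) hx
  have hIK : I ∈ K := hK ▸ IntermediateField.subset_adjoin _ _ (by simp)
  exact ⟨hnsq, fun x y hx hy => eq_zero_of_sq_add_mul_sq_eq_zero I_sq hIK hnsq hx hy⟩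

/-- Let `p` and `q` be distinct primes with `q ≡ 3 (mod 4)`, and let
`K = ℚ(i, √p)` (as a subfield of `ℂ`). Then `q` is not a square in `K`; hence the form
`x² + q y²` is anisotropic over `K`, i.e. `SO(x² + q y²)` is an anisotropic torus over `K`. -/
theorem q_not_square_and_form_anisotropic
    (p q : ℕ) (hp : p.Prime) (hq : q.Prime) (hpq : p ≠ q) (hq4 : q % 4 = 3)
    (K : IntermediateField ℚ ℂ)
    (hK : K = IntermediateField.adjoin ℚ ({Complex.I, ((Real.sqrt p : ℝ) : ℂ)} : Set ℂ)) :
    (¬ ∃ x ∈ K, x ^ 2 = (q : ℂ)) ∧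
      ∀ x y : ℂ, x ∈ K → y ∈ K → x ^ 2 + (q : ℂ) * y ^ 2 = 0 → x = 0 ∧ y = 0 :=
  q_not_square_and_form_anisotropic_general p q hp hq hpq K hK
end
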